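/- Let c ≥ 2, n ≥ 1, 0 < ε < 1, and let x_1, …, x_m be positive reals (m ≥ 1) such that exactly N of them exceed R(c)^(1-ε)·c^(n(1+ε)), each of those N is less than R(c)·c^(2n), and the remaining m - N are each at most R(c)^(1-ε)·c^(n(1+ε)). If κ·R(c)^(1-ε)·c^(2n) < (∏ x_i)^(1/m) for some κ > 0, then κ·c^(n(1-ε)) < (R(c)^ε · c^(n(1-ε)))^(N/m). -/

import Mathlib

/-!
Bounding the `N` large terms by `B = R(c) c^(2n)` and the others by `S = R(c)^(1-ε) c^(n(1+ε))`,
the geometric mean is at most `B^(N/m) S^(1-N/m) = S (B/S)^(N/m)`. Since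
`R(c)^(1-ε) c^(2n) = S c^(n(1-ε))` and `B/S = R(c)^ε c^(n(1-ε))`, dividing the hypothesis by `S`
gives the claim.
-/

/-- The radical of a natural number: the product of its distinct prime factors. -/
def rad (m : ℕ) : ℕ := ∏ p ∈ m.primeFactors, p

open Finset

theorem rad_pos (c : ℕ) : 0 < rad c :=
  prod_pos fun _ hp => (Nat.prime_of_mem_primeFactors hp).pos

theorem Finset.prod_le_pow_card_mul_pow_card_compl {ι R : Type*} [Fintype ι] [DecidableEq ι]
    [CommSemiring R] [PartialOrder R] [IsOrderedRing R] {x : ι → R} (hx : ∀ i, 0 ≤ x i)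
    (A : Finset ι) {B S : R} (hB : ∀ i ∈ A, x i ≤ B) (hS : ∀ i ∉ A, x i ≤ S) :
    ∏ i, x i ≤ B ^ #A * S ^ #Aᶜ := by
  rw [← prod_mul_prod_compl A, ← prod_const B, ← prod_const S]
  exact mul_le_mul (prod_le_prod (fun i _ => hx i) hB)
    (prod_le_prod (fun i _ => hx i) fun i hi => hS i (mem_compl.mp hi))
    (prod_nonneg fun i _ => hx i) (prod_nonneg fun i hi => (hx i).trans (hB i hi))

theorem Real.geom_mean_le_of_le_of_compl_le {ι : Type*} [Fintype ι] [Nonempty ι] [DecidableEq ι]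
    {x : ι → ℝ} (hx : ∀ i, 0 ≤ x i) (A : Finset ι) {B S : ℝ} (hB0 : 0 ≤ B) (hS0 : 0 < S)
    (hB : ∀ i ∈ A, x i ≤ B) (hS : ∀ i ∉ A, x i ≤ S) :
    (∏ i, x i) ^ (1 / (Fintype.card ι : ℝ)) ≤ S * (B / S) ^ ((#A : ℝ) / Fintype.card ι) := by
  set m := Fintype.card ι
  have hm : (m : ℝ) ≠ 0 := by positivity
  have hsplit : B ^ #A * S ^ #Aᶜ = (S * (B / S) ^ ((#A : ℝ) / m)) ^ (m : ℝ) := by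
    rw [Real.mul_rpow hS0.le (by positivity), ← Real.rpow_mul (by positivity),
      div_mul_cancel₀ _ hm, Real.rpow_natCast, Real.rpow_natCast, div_pow,
      show m = #Aᶜ + #A from (card_compl_add_card A).symm, pow_add]
    field_simp
  calc (∏ i, x i) ^ (1 / (m : ℝ))
      ≤ (B ^ #A * S ^ #Aᶜ) ^ (1 / (m : ℝ)) :=
        Real.rpow_le_rpow (prod_nonneg fun i _ => hx i)
          (prod_le_pow_card_mul_pow_card_compl hx A hB hS) (by positivity)
    _ = S * (B / S) ^ ((#A : ℝ) / m) := by
        rw [hsplit, ← Real.rpow_mul (by positivity), mul_one_div_cancel hm, Real.rpow_one]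

theorem stmt_8_general (c n : ℕ) (hc : 2 ≤ c) (ε : ℝ)
    (m : ℕ) (hm : 1 ≤ m) (x : Fin m → ℝ) (hx : ∀ i, 0 < x i)
    (N : ℕ) (A : Finset (Fin m)) (hA : A.card = N)
    (hbig : ∀ i ∈ A, (rad c : ℝ) ^ (1 - ε) * (c : ℝ) ^ ((n : ℝ) * (1 + ε)) < x i ∧
      x i < (rad c : ℝ) * (c : ℝ) ^ (2 * (n : ℝ)))
    (hsmall : ∀ i ∉ A, x i ≤ (rad c : ℝ) ^ (1 - ε) * (c : ℝ) ^ ((n : ℝ) * (1 + ε)))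
    (κ : ℝ)
    (hGM : κ * (rad c : ℝ) ^ (1 - ε) * (c : ℝ) ^ (2 * (n : ℝ)) <
      (∏ i, x i) ^ (1 / (m : ℝ))) :
    κ * (c : ℝ) ^ ((n : ℝ) * (1 - ε)) <
      ((rad c : ℝ) ^ ε * (c : ℝ) ^ ((n : ℝ) * (1 - ε))) ^ ((N : ℝ) / (m : ℝ)) := by
  set R : ℝ := (rad c : ℝ)
  set S := R ^ (1 - ε) * (c : ℝ) ^ ((n : ℝ) * (1 + ε))
  have hR : 0 < R := Nat.cast_pos.mpr (rad_pos c)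
  have hc0 : (0 : ℝ) < c := Nat.cast_pos.mpr (by omega)
  have hS : 0 < S := by positivity
  have hquot : R * (c : ℝ) ^ (2 * (n : ℝ)) / S = R ^ ε * (c : ℝ) ^ ((n : ℝ) * (1 - ε)) := by
    conv_lhs => rw [← Real.rpow_one R]
    rw [mul_div_mul_comm, ← Real.rpow_sub hR, ← Real.rpow_sub hc0]
    ring_nf
  have hscale : κ * R ^ (1 - ε) * (c : ℝ) ^ (2 * (n : ℝ)) =
      S * (κ * (c : ℝ) ^ ((n : ℝ) * (1 - ε))) := by
    rw [show 2 * (n : ℝ) = n * (1 + ε) + n * (1 - ε) by ring, Real.rpow_add hc0]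
    ring
  have : Nonempty (Fin m) := Fin.pos_iff_nonempty.mp hm
  have hmean := Real.geom_mean_le_of_le_of_compl_le (fun i => (hx i).le) A (by positivity) hS
    (fun i hi => (hbig i hi).2.le) hsmall
  rw [Fintype.card_fin, hA, hquot] at hmean
  rw [hscale] at hGM
  exact lt_of_mul_lt_mul_left (hGM.trans_le hmean) hS.le

theorem stmt_8 (c n : ℕ) (hc : 2 ≤ c) (hn : 1 ≤ n) (ε : ℝ) (hε0 : 0 < ε) (hε1 : ε < 1)
    (m : ℕ) (hm : 1 ≤ m) (x : Fin m → ℝ) (hx : ∀ i, 0 < x i)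
    (N : ℕ) (A : Finset (Fin m)) (hA : A.card = N)
    (hbig : ∀ i ∈ A, (rad c : ℝ) ^ (1 - ε) * (c : ℝ) ^ ((n : ℝ) * (1 + ε)) < x i ∧
      x i < (rad c : ℝ) * (c : ℝ) ^ (2 * (n : ℝ)))
    (hsmall : ∀ i ∉ A, x i ≤ (rad c : ℝ) ^ (1 - ε) * (c : ℝ) ^ ((n : ℝ) * (1 + ε)))
    (κ : ℝ) (hκ : 0 < κ)
    (hGM : κ * (rad c : ℝ) ^ (1 - ε) * (c : ℝ) ^ (2 * (n : ℝ)) <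
      (∏ i, x i) ^ (1 / (m : ℝ))) :
    κ * (c : ℝ) ^ ((n : ℝ) * (1 - ε)) <
      ((rad c : ℝ) ^ ε * (c : ℝ) ^ ((n : ℝ) * (1 - ε))) ^ ((N : ℝ) / (m : ℝ)) :=
  stmt_8_general c n hc ε m hm x hx N A hA hbig hsmall κ hGM
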